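/- arXiv:2510.25983 — 2 statements merged into one kernel-verified Lean document; each statement's English description precedes it below -/
import Mathlib

section
/- Let Ψ : (0,∞)^M → ℝ be twice differentiable. If Ψ is convex, then the Ψ-induced scoring rule λ^Ψ is proper on Δ°, i.e. ⟨η*, λ^Ψ(η̂)⟩ ≥ ⟨η*, λ^Ψ(η*)⟩ for all η̂, η* ∈ Δ°. If Ψ is strictly convex, then λ^Ψ is strictly proper on Δ°, i.e. the inequality is an equality only when η̂ = η*. -/
/-!
With `ρ̂ = ρ(η̂)` and `ρ* = ρ(η*)`, the expected score gap `⟨η*, λ^Ψ(η̂)⟩ − ⟨η*, λ^Ψ(η*)⟩` is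
`η*_0` times the Bregman divergence `Ψ(ρ*) − Ψ(ρ̂) − DΨ(ρ̂)(ρ* − ρ̂)`. The first-order
characterization of (strict) convexity, obtained by restricting `Ψ` to the segment from `ρ̂` to
`ρ*`, makes this nonnegative (positive when `ρ̂ ≠ ρ*`), and `η ↦ ρ(η)` is injective on `Δ°`
because `η_0 (1 + ∑ ρ_z) = 1`.
-/

open scoped BigOperators

/-- The interior of the standard probability simplex in `ℝ^{M+1}`. -/
def posSimplex (M : ℕ) : Set (Fin (M + 1) → ℝ) :=
  {η | (∀ i, 0 < η i) ∧ ∑ i, η i = 1}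

/-- `ρ(η) = (η_1/η_0, …, η_M/η_0)`. -/
noncomputable def rhoOf (M : ℕ) (η : Fin (M + 1) → ℝ) : Fin M → ℝ :=
  fun z => η z.succ / η 0

/-- The `Ψ`-induced scoring rule: `λ^Ψ_0(η) = ⟨ρ, ∇Ψ(ρ)⟩ − Ψ(ρ)` and
`λ^Ψ_z(η) = −(∇Ψ(ρ))_z` for `z = 1, …, M`, where `ρ = ρ(η)`. -/
noncomputable def inducedRule (M : ℕ) (Ψ : (Fin M → ℝ) → ℝ)
    (η : Fin (M + 1) → ℝ) : Fin (M + 1) → ℝ :=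
  Fin.cons
    ((∑ z, rhoOf M η z * fderiv ℝ Ψ (rhoOf M η) (Pi.single z 1)) - Ψ (rhoOf M η))
    (fun z => - fderiv ℝ Ψ (rhoOf M η) (Pi.single z 1))

theorem StrictConvexOn.comp_affineMap_of_injective {𝕜 E F β : Type*} [Field 𝕜] [LinearOrder 𝕜]
    [IsStrictOrderedRing 𝕜] [AddCommGroup E] [AddCommGroup F] [Module 𝕜 E] [Module 𝕜 F]
    [AddCommMonoid β] [PartialOrder β] [SMul 𝕜 β] {f : F → β} {s : Set F}
    (hf : StrictConvexOn 𝕜 s f) (g : E →ᵃ[𝕜] F) (hg : Function.Injective g) :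
    StrictConvexOn 𝕜 (g ⁻¹' s) (f ∘ g) :=
  ⟨hf.1.affine_preimage _, fun x hx y hy hxy a b ha hb hab => by
    simpa only [Function.comp_apply, Convex.combo_affine_apply hab] using
      hf.2 hx hy (hg.ne hxy) ha hb hab⟩

section FirstOrder

variable {E : Type*} [NormedAddCommGroup E] [NormedSpace ℝ E] {s : Set E} {f : E → ℝ}
  {f' : E →L[ℝ] ℝ} {x y : E}

lemma hasDerivAt_comp_lineMap_zero (hf : HasFDerivAt f f' x) (y : E) :
    HasDerivAt (f ∘ AffineMap.lineMap (k := ℝ) x y) (f' (y - x)) 0 :=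
  hf.comp_hasDerivAt_of_eq (x := 0) AffineMap.hasDerivAt_lineMap
    (AffineMap.lineMap_apply_zero x y).symm

lemma ConvexOn.hasFDerivAt_apply_sub_le (hf : ConvexOn ℝ s f) (hx : x ∈ s) (hy : y ∈ s)
    (hf' : HasFDerivAt f f' x) : f' (y - x) ≤ f y - f x := by
  have h := (hf.comp_affineMap (AffineMap.lineMap x y)).le_slope_of_hasDerivAt (x := 0)
    (y := 1) (by simpa using hx) (by simpa using hy) one_pos
    (hasDerivAt_comp_lineMap_zero hf' y)
  simpa [slope_def_field] using h

lemma StrictConvexOn.hasFDerivAt_apply_sub_lt (hf : StrictConvexOn ℝ s f) (hx : x ∈ s)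
    (hy : y ∈ s) (hxy : x ≠ y) (hf' : HasFDerivAt f f' x) : f' (y - x) < f y - f x := by
  have h := (hf.comp_affineMap_of_injective _
    (AffineMap.lineMap_injective ℝ hxy)).lt_slope_of_hasDerivAt (x := 0)
    (y := 1) (by simpa using hx) (by simpa using hy) one_pos
    (hasDerivAt_comp_lineMap_zero hf' y)
  simpa [slope_def_field] using h

end FirstOrder

lemma sum_mul_apply_single {ι : Type*} [Fintype ι] [DecidableEq ι] (L : (ι → ℝ) →L[ℝ] ℝ)
    (x : ι → ℝ) : ∑ i, x i * L (Pi.single i 1) = L x := by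
  conv_rhs => rw [pi_eq_sum_univ' x, map_sum]
  simp only [map_smul, smul_eq_mul]

section Simplex

variable {M : ℕ} {η : Fin (M + 1) → ℝ}

lemma rhoOf_pos (hη : η ∈ posSimplex M) (z : Fin M) : 0 < rhoOf M η z :=
  div_pos (hη.1 _) (hη.1 0)

lemma apply_zero_mul_rhoOf (h0 : η 0 ≠ 0) (z : Fin M) : η 0 * rhoOf M η z = η z.succ :=
  mul_div_cancel₀ _ h0

lemma apply_zero_mul_one_add_sum_rhoOf (hη : η ∈ posSimplex M) :
    η 0 * (1 + ∑ z, rhoOf M η z) = 1 := by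
  rw [mul_add, mul_one, Finset.mul_sum, ← hη.2, Fin.sum_univ_succ]
  simp only [apply_zero_mul_rhoOf (hη.1 0).ne']

lemma rhoOf_injOn : Set.InjOn (rhoOf M) (posSimplex M) := by
  intro η hη ξ hξ hρ
  have h0 : η 0 = ξ 0 := by
    have hsum : 0 < 1 + ∑ z, rhoOf M ξ z :=
      add_pos_of_pos_of_nonneg one_pos (Finset.sum_nonneg fun z _ => (rhoOf_pos hξ z).le)
    refine mul_right_cancel₀ hsum.ne' ?_
    rw [apply_zero_mul_one_add_sum_rhoOf hξ, ← hρ, apply_zero_mul_one_add_sum_rhoOf hη]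
  funext i
  refine Fin.cases h0 (fun z => ?_) i
  rw [← apply_zero_mul_rhoOf (hη.1 0).ne', ← apply_zero_mul_rhoOf (hξ.1 0).ne', hρ, h0]

end Simplex

lemma sum_mul_inducedRule {M : ℕ} (Ψ : (Fin M → ℝ) → ℝ) {ηs : Fin (M + 1) → ℝ}
    (hs : ηs 0 ≠ 0) (ηh : Fin (M + 1) → ℝ) :
    ∑ i, ηs i * inducedRule M Ψ ηh i = ηs 0 *
      (fderiv ℝ Ψ (rhoOf M ηh) (rhoOf M ηh - rhoOf M ηs) - Ψ (rhoOf M ηh)) := by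
  simp only [Fin.sum_univ_succ, inducedRule, Fin.cons_zero, Fin.cons_succ, sum_mul_apply_single,
    ← apply_zero_mul_rhoOf hs, map_sub]
  rw [← sum_mul_apply_single _ (rhoOf M ηs)]
  simp only [mul_neg, Finset.sum_neg_distrib, mul_assoc, ← Finset.mul_sum]
  ring

lemma sum_mul_inducedRule_sub_self {M : ℕ} (Ψ : (Fin M → ℝ) → ℝ) {ηs : Fin (M + 1) → ℝ}
    (hs : ηs 0 ≠ 0) (ηh : Fin (M + 1) → ℝ) :
    ∑ i, ηs i * inducedRule M Ψ ηh i - ∑ i, ηs i * inducedRule M Ψ ηs i = ηs 0 *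
      (Ψ (rhoOf M ηs) - Ψ (rhoOf M ηh) - fderiv ℝ Ψ (rhoOf M ηh) (rhoOf M ηs - rhoOf M ηh)) := by
  rw [sum_mul_inducedRule Ψ hs, sum_mul_inducedRule Ψ hs, sub_self, map_zero,
    ← neg_sub (rhoOf M ηs), map_neg]
  ring

theorem inducedRule_proper_of_convex_general
    (M : ℕ)
    (Ψ : (Fin M → ℝ) → ℝ)
    (hΨ : ∀ ρ : Fin M → ℝ, (∀ i, 0 < ρ i) → DifferentiableAt ℝ Ψ ρ) :
    (ConvexOn ℝ {ρ : Fin M → ℝ | ∀ i, 0 < ρ i} Ψ →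
      ∀ ηs ∈ posSimplex M, ∀ ηh ∈ posSimplex M,
        (∑ i, ηs i * inducedRule M Ψ ηs i) ≤ ∑ i, ηs i * inducedRule M Ψ ηh i)
    ∧ (StrictConvexOn ℝ {ρ : Fin M → ℝ | ∀ i, 0 < ρ i} Ψ →
        (∀ ηs ∈ posSimplex M, ∀ ηh ∈ posSimplex M,
          (∑ i, ηs i * inducedRule M Ψ ηs i) ≤ ∑ i, ηs i * inducedRule M Ψ ηh i)
        ∧ (∀ ηs ∈ posSimplex M, ∀ ηh ∈ posSimplex M,
            (∑ i, ηs i * inducedRule M Ψ ηh i) = (∑ i, ηs i * inducedRule M Ψ ηs i) →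
            ηh = ηs)) := by
  have proper (hconv : ConvexOn ℝ {ρ : Fin M → ℝ | ∀ i, 0 < ρ i} Ψ)
      (ηs : Fin (M + 1) → ℝ) (hs : ηs ∈ posSimplex M)
      (ηh : Fin (M + 1) → ℝ) (hh : ηh ∈ posSimplex M) :
      (∑ i, ηs i * inducedRule M Ψ ηs i) ≤ ∑ i, ηs i * inducedRule M Ψ ηh i := by
    have hgap := hconv.hasFDerivAt_apply_sub_le (rhoOf_pos hh) (rhoOf_pos hs)
      (hΨ _ (rhoOf_pos hh)).hasFDerivAt
    rw [← sub_nonneg, sum_mul_inducedRule_sub_self Ψ (hs.1 0).ne']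
    exact mul_nonneg (hs.1 0).le (by linarith)
  refine ⟨proper, fun hstrict => ⟨proper hstrict.convexOn, fun ηs hs ηh hh heq => ?_⟩⟩
  by_contra hne
  have hgap := hstrict.hasFDerivAt_apply_sub_lt (rhoOf_pos hh) (rhoOf_pos hs)
    (fun hρ => hne (rhoOf_injOn hh hs hρ)) (hΨ _ (rhoOf_pos hh)).hasFDerivAt
  have hzero := sum_mul_inducedRule_sub_self Ψ (hs.1 0).ne' ηh
  rw [heq, sub_self] at hzero
  exact (mul_pos (hs.1 0) (by linarith)).ne hzero

/-- for twice differentiable `Ψ : (0,∞)^M → ℝ`, if `Ψ` is convex then `λ^Ψ` is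
proper on `Δ°`, and if `Ψ` is strictly convex then `λ^Ψ` is strictly proper on `Δ°`. -/
theorem inducedRule_proper_of_convex
    (M : ℕ) (hM : 1 ≤ M)
    (Ψ : (Fin M → ℝ) → ℝ)
    (hΨ : ∀ ρ : Fin M → ℝ, (∀ i, 0 < ρ i) → DifferentiableAt ℝ Ψ ρ)
    (hΨ' : ∀ ρ : Fin M → ℝ, (∀ i, 0 < ρ i) → DifferentiableAt ℝ (fderiv ℝ Ψ) ρ) :
    (ConvexOn ℝ {ρ : Fin M → ℝ | ∀ i, 0 < ρ i} Ψ →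
      ∀ ηs ∈ posSimplex M, ∀ ηh ∈ posSimplex M,
        (∑ i, ηs i * inducedRule M Ψ ηs i) ≤ ∑ i, ηs i * inducedRule M Ψ ηh i)
    ∧ (StrictConvexOn ℝ {ρ : Fin M → ℝ | ∀ i, 0 < ρ i} Ψ →
        (∀ ηs ∈ posSimplex M, ∀ ηh ∈ posSimplex M,
          (∑ i, ηs i * inducedRule M Ψ ηs i) ≤ ∑ i, ηs i * inducedRule M Ψ ηh i)
        ∧ (∀ ηs ∈ posSimplex M, ∀ ηh ∈ posSimplex M,
            (∑ i, ηs i * inducedRule M Ψ ηh i) = (∑ i, ηs i * inducedRule M Ψ ηs i) →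
            ηh = ηs)) :=
  inducedRule_proper_of_convex_general M Ψ hΨ
end

section
/- Let λ be a scoring rule that extends to a differentiable map on an open neighborhood of Δ° in ℝ^{M+1}. Then for all η, η* ∈ Δ°: B_{f^λ}(η*, η) = −η*_0 · B_{Ψ^λ}(ρ(η*), ρ(η)). Consequently, if λ is proper, then Reg^λ(η ‖ η*) = η*_0 · B_{Ψ^λ}(ρ(η*), ρ(η)) for all η, η* ∈ Δ°. -/
open scoped BigOperators

/-- `η(ρ) = (1, ρ_1, …, ρ_M)/(1 + ρ_1 + ⋯ + ρ_M)`. -/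
noncomputable def etaOfRho (M : ℕ) (ρ : Fin M → ℝ) : Fin (M + 1) → ℝ :=
  fun i => Fin.cons (α := fun _ => ℝ) (1 : ℝ) ρ i / (1 + ∑ j, ρ j)

/-- The generating function `Ψ^λ(ρ) = −⟨(1, ρ), λ(η(ρ))⟩` of a scoring rule `λ`. -/
noncomputable def genFun (M : ℕ)
    (lam : (Fin (M + 1) → ℝ) → (Fin (M + 1) → ℝ)) (ρ : Fin M → ℝ) : ℝ :=
  -∑ i, Fin.cons (α := fun _ => ℝ) (1 : ℝ) ρ i * lam (etaOfRho M ρ) i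

/-- Bregman distortion `B_F(u, v) = F(u) − F(v) − ⟨∇F(v), u − v⟩`. -/
noncomputable def bregman {n : ℕ} (F : (Fin n → ℝ) → ℝ) (u v : Fin n → ℝ) : ℝ :=
  F u - F v - fderiv ℝ F v (u - v)

/-!
The Bayes risk `f(x) = ⟨x, λ(x)⟩` has the degree-one homogeneous extension (its perspective)
`G(x) = ⟨x, λ(x / Σ x)⟩`, which agrees with `f` on the hyperplane `Σ x = 1`; hence `B_f = B_G` on
`Δ°`, since Bregman distortions only see the function along the line through the two points.
The generating function is `Ψ(ρ) = -G(1, ρ)`, and `(1, ρ(η)) = η / η_0`. Bregman distortions of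
a homogeneous `G` scale as `B_G(a u, b v) = a B_G(u, v)` (Euler's identity `∇G(v) v = G(v)` and
`∇G(b v) = ∇G(v)`), which gives the factor `-η*_0`.

If `λ` is proper, then `G(x) ≤ ⟨x, λ(η)⟩` near `η`, with equality at `η`, so `∇G(η) = λ(η)` and
`B_f(η*, η) = f(η*) - ⟨η*, λ(η)⟩ = -Reg^λ(η ‖ η*)`.
-/

open Filter Topology

section Derivatives

variable {E : Type*} [NormedAddCommGroup E] [NormedSpace ℝ E] {G : E → ℝ}

theorem fderiv_apply_self_of_homogeneous (hG : ∀ (c : ℝ) x, G (c • x) = c * G x) {v : E}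
    (hv : DifferentiableAt ℝ G v) : fderiv ℝ G v v = G v := by
  have hline : HasDerivAt (fun t : ℝ => G (t • v)) (fderiv ℝ G v v) 1 := by
    have hv' : HasFDerivAt G (fderiv ℝ G v) ((1 : ℝ) • v) := by
      rw [one_smul]; exact hv.hasFDerivAt
    simpa [Function.comp_def] using
      hv'.comp_hasDerivAt (1 : ℝ) ((hasDerivAt_id (1 : ℝ)).smul_const v)
  have hlin : HasDerivAt (fun t : ℝ => G (t • v)) (G v) 1 := by
    simpa [hG] using (hasDerivAt_id (1 : ℝ)).mul_const (G v)
  exact hline.unique hlin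

theorem hasFDerivAt_smul_of_homogeneous (hG : ∀ (c : ℝ) x, G (c • x) = c * G x) {b : ℝ}
    (hb : b ≠ 0) {v : E} (hv : DifferentiableAt ℝ G v) :
    HasFDerivAt G (fderiv ℝ G v) (b • v) := by
  have hrescale : (fun y => b * G (b⁻¹ • y)) = G := by
    funext y
    rw [hG, ← mul_assoc, mul_inv_cancel₀ hb, one_mul]
  have hinner : HasFDerivAt (fun y : E => b⁻¹ • y) (b⁻¹ • ContinuousLinearMap.id ℝ E) (b • v) :=
    (hasFDerivAt_id _).const_smul b⁻¹
  have hv' : HasFDerivAt G (fderiv ℝ G v) (b⁻¹ • b • v) := by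
    rw [inv_smul_smul₀ hb]; exact hv.hasFDerivAt
  have hcomp := (hv'.comp (b • v) hinner).const_mul b
  simp only [Function.comp_apply, hrescale] at hcomp
  have hL : b • (fderiv ℝ G v).comp (b⁻¹ • ContinuousLinearMap.id ℝ E) = fderiv ℝ G v := by
    ext w
    simp [hb]
  rwa [hL] at hcomp

theorem fderiv_eq_of_eventually_le_of_eq {f g : E → ℝ} {x : E} (hle : ∀ᶠ y in 𝓝 x, f y ≤ g y)
    (heq : f x = g x) (hf : DifferentiableAt ℝ f x) (hg : DifferentiableAt ℝ g x) :
    fderiv ℝ f x = fderiv ℝ g x := by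
  have hmin : IsLocalMin (fun y => g y - f y) x :=
    hle.mono fun y hy => by simpa [heq] using hy
  have hzero := hmin.fderiv_eq_zero
  rw [fderiv_fun_sub hg hf, sub_eq_zero] at hzero
  exact hzero.symm

end Derivatives

section Bregman

variable {m n : ℕ} {F G : (Fin n → ℝ) → ℝ} {u v : Fin n → ℝ}

theorem bregman_neg (F : (Fin n → ℝ) → ℝ) (u v : Fin n → ℝ) :
    bregman (fun x => -F x) u v = -bregman F u v := by
  simp only [bregman, fderiv_fun_neg, neg_apply]
  ring

theorem bregman_comp_of_hasFDerivAt {A : (Fin m → ℝ) → (Fin n → ℝ)}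
    {L : (Fin m → ℝ) →L[ℝ] (Fin n → ℝ)} {u v : Fin m → ℝ} (hA : HasFDerivAt A L v)
    (hAL : A u - A v = L (u - v)) (hF : DifferentiableAt ℝ F (A v)) :
    bregman (F ∘ A) u v = bregman F (A u) (A v) := by
  simp only [bregman, (hF.hasFDerivAt.comp v hA).fderiv, ContinuousLinearMap.comp_apply, hAL,
    Function.comp_apply]

theorem bregman_eq_of_eq_on_line (hFG : ∀ t : ℝ, F (v + t • (u - v)) = G (v + t • (u - v)))
    (hF : DifferentiableAt ℝ F v) (hG : DifferentiableAt ℝ G v) :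
    bregman F u v = bregman G u v := by
  have hline : ∀ H : (Fin n → ℝ) → ℝ, DifferentiableAt ℝ H v →
      HasDerivAt (fun t : ℝ => H (v + t • (u - v))) (fderiv ℝ H v (u - v)) 0 := by
    intro H hH
    have hH' : HasFDerivAt H (fderiv ℝ H v) (v + (0 : ℝ) • (u - v)) := by
      rw [zero_smul, add_zero]; exact hH.hasFDerivAt
    simpa [Function.comp_def] using
      hH'.comp_hasDerivAt (0 : ℝ) (((hasDerivAt_id (0 : ℝ)).smul_const (u - v)).const_add v)
  have hderiv : fderiv ℝ F v (u - v) = fderiv ℝ G v (u - v) :=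
    (hline F hF).unique (by simpa only [hFG] using hline G hG)
  simpa [bregman, hderiv] using congrArg₂ (· - · - fderiv ℝ G v (u - v)) (hFG 1) (hFG 0)

theorem bregman_eq_sub_fderiv_of_homogeneous (hG : ∀ (c : ℝ) x, G (c • x) = c * G x)
    (hv : DifferentiableAt ℝ G v) :
    bregman G u v = G u - fderiv ℝ G v u := by
  rw [bregman, map_sub, fderiv_apply_self_of_homogeneous hG hv]
  ring

theorem bregman_smul_smul_of_homogeneous (hG : ∀ (c : ℝ) x, G (c • x) = c * G x) (a : ℝ)
    {b : ℝ} (hb : b ≠ 0) (hv : DifferentiableAt ℝ G v) :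
    bregman G (a • u) (b • v) = a * bregman G u v := by
  have hbv : DifferentiableAt ℝ G (b • v) :=
    (hasFDerivAt_smul_of_homogeneous hG hb hv).differentiableAt
  rw [bregman_eq_sub_fderiv_of_homogeneous hG hbv, bregman_eq_sub_fderiv_of_homogeneous hG hv,
    (hasFDerivAt_smul_of_homogeneous hG hb hv).fderiv, hG, map_smul, smul_eq_mul]
  ring

end Bregman

section BayesRisk

variable {n : ℕ} (lam : (Fin n → ℝ) → (Fin n → ℝ)) {x : Fin n → ℝ}

noncomputable def bayesRisk (x : Fin n → ℝ) : ℝ :=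
  ∑ i, x i * lam x i

noncomputable def bayesRiskPerspective (x : Fin n → ℝ) : ℝ :=
  ∑ i, x i * lam ((∑ k, x k)⁻¹ • x) i

theorem bayesRiskPerspective_smul (c : ℝ) (x : Fin n → ℝ) :
    bayesRiskPerspective lam (c • x) = c * bayesRiskPerspective lam x := by
  rcases eq_or_ne c 0 with rfl | hc
  · simp [bayesRiskPerspective]
  · have hnorm : (∑ k, (c • x) k)⁻¹ • c • x = (∑ k, x k)⁻¹ • x := by
      simp only [Pi.smul_apply, smul_eq_mul, ← Finset.mul_sum, smul_smul, mul_inv, mul_assoc]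
      rw [mul_left_comm, inv_mul_cancel₀ hc, mul_one]
    rw [bayesRiskPerspective, bayesRiskPerspective, hnorm, Finset.mul_sum]
    simp only [Pi.smul_apply, smul_eq_mul, mul_assoc]

theorem bayesRiskPerspective_of_sum_eq_one (hx : ∑ k, x k = 1) :
    bayesRiskPerspective lam x = bayesRisk lam x := by
  simp [bayesRiskPerspective, bayesRisk, hx]

variable {lam}

theorem differentiableAt_bayesRisk (h : DifferentiableAt ℝ lam x) :
    DifferentiableAt ℝ (bayesRisk lam) x :=
  DifferentiableAt.fun_sum fun i _ =>
    (differentiableAt_apply i x).mul (differentiableAt_pi.1 h i)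

theorem differentiableAt_bayesRiskPerspective (hx : ∑ k, x k ≠ 0)
    (h : DifferentiableAt ℝ lam ((∑ k, x k)⁻¹ • x)) :
    DifferentiableAt ℝ (bayesRiskPerspective lam) x := by
  set normalize := fun y : Fin n → ℝ => (∑ k, y k)⁻¹ • y
  have hnorm : DifferentiableAt ℝ normalize x :=
    ((DifferentiableAt.fun_sum fun k _ => differentiableAt_apply k x).inv hx).smul
      differentiableAt_id
  exact DifferentiableAt.fun_sum fun i _ =>
    (differentiableAt_apply i x).mul (differentiableAt_pi.1 (h.comp (f := normalize) x hnorm) i)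

theorem differentiableAt_bayesRiskPerspective_of_sum_eq_one (hx : ∑ k, x k = 1)
    (h : DifferentiableAt ℝ lam x) : DifferentiableAt ℝ (bayesRiskPerspective lam) x :=
  differentiableAt_bayesRiskPerspective (by simp [hx]) (by simpa [hx] using h)

theorem bregman_bayesRisk_eq_bregman_bayesRiskPerspective {u v : Fin n → ℝ}
    (hu : ∑ k, u k = 1) (hv : ∑ k, v k = 1) (h : DifferentiableAt ℝ lam v) :
    bregman (bayesRisk lam) u v = bregman (bayesRiskPerspective lam) u v := by
  refine bregman_eq_of_eq_on_line (fun t => ?_) (differentiableAt_bayesRisk h)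
    (differentiableAt_bayesRiskPerspective_of_sum_eq_one hv h)
  refine (bayesRiskPerspective_of_sum_eq_one lam ?_).symm
  simp [Finset.sum_add_distrib, ← Finset.mul_sum, Finset.sum_sub_distrib, hu, hv]

end BayesRisk

section Simplex

variable {M : ℕ} {lam : (Fin (M + 1) → ℝ) → (Fin (M + 1) → ℝ)} {η ηs : Fin (M + 1) → ℝ}

theorem cons_one_rhoOf (h : η 0 ≠ 0) :
    (Fin.cons 1 (rhoOf M η) : Fin (M + 1) → ℝ) = (η 0)⁻¹ • η := by
  funext i
  refine Fin.cases ?_ (fun z => ?_) i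
  · simp [inv_mul_cancel₀ h]
  · simp [rhoOf, div_eq_inv_mul]

theorem sum_inv_smul_mem_posSimplex {y : Fin (M + 1) → ℝ} (hy : ∀ i, 0 < y i) :
    (∑ k, y k)⁻¹ • y ∈ posSimplex M := by
  have hs : 0 < ∑ k, y k := Finset.sum_pos (fun i _ => hy i) Finset.univ_nonempty
  refine ⟨fun i => ?_, ?_⟩
  · simpa using mul_pos (inv_pos.2 hs) (hy i)
  · simp [← Finset.mul_sum, inv_mul_cancel₀ hs.ne']

variable (lam) in
theorem genFun_eq_neg_bayesRiskPerspective :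
    genFun M lam = fun ρ => -bayesRiskPerspective lam (Fin.cons 1 ρ) := by
  funext ρ
  have hη : etaOfRho M ρ = (1 + ∑ j, ρ j)⁻¹ • Fin.cons 1 ρ := by
    funext i
    simp [etaOfRho, div_eq_inv_mul]
  simp [genFun, bayesRiskPerspective, Fin.sum_cons, hη]

theorem bregman_genFun {u v : Fin M → ℝ}
    (hd : DifferentiableAt ℝ (bayesRiskPerspective lam) (Fin.cons 1 v)) :
    bregman (genFun M lam) u v
      = -bregman (bayesRiskPerspective lam) (Fin.cons 1 u) (Fin.cons 1 v) := by
  rw [genFun_eq_neg_bayesRiskPerspective, bregman_neg]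
  congr 1
  refine bregman_comp_of_hasFDerivAt (A := fun ρ => Fin.cons (1 : ℝ) ρ)
    ((hasFDerivAt_const 1 v).finCons (hasFDerivAt_id v)) ?_ hd
  funext i
  refine Fin.cases ?_ (fun z => ?_) i <;> simp

theorem fderiv_bayesRiskPerspective_of_proper
    (hproper : ∀ y ∈ posSimplex M, bayesRisk lam y ≤ ∑ i, y i * lam η i)
    (hη : η ∈ posSimplex M) (hd : DifferentiableAt ℝ lam η) (w : Fin (M + 1) → ℝ) :
    fderiv ℝ (bayesRiskPerspective lam) η w = ∑ i, w i * lam η i := by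
  set ℓ : (Fin (M + 1) → ℝ) →L[ℝ] ℝ := ∑ i, lam η i • ContinuousLinearMap.proj i
  have hℓ : ∀ x, ℓ x = ∑ i, x i * lam η i := fun x => by simp [ℓ, mul_comm]
  have hle : ∀ᶠ y in 𝓝 η, bayesRiskPerspective lam y ≤ ℓ y := by
    filter_upwards [eventually_all.2 fun i =>
      continuousAt_const.eventually_lt (continuous_apply i).continuousAt (hη.1 i)] with y hy
    have hs : 0 < ∑ k, y k := Finset.sum_pos (fun i _ => hy i) Finset.univ_nonempty
    have hz := sum_inv_smul_mem_posSimplex hy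
    calc bayesRiskPerspective lam y
        = (∑ k, y k) * bayesRisk lam ((∑ k, y k)⁻¹ • y) := by
          rw [← bayesRiskPerspective_of_sum_eq_one lam hz.2, ← bayesRiskPerspective_smul,
            smul_inv_smul₀ hs.ne']
      _ ≤ (∑ k, y k) * ∑ i, ((∑ k, y k)⁻¹ • y) i * lam η i :=
          mul_le_mul_of_nonneg_left (hproper _ hz) hs.le
      _ = ℓ y := by
          simp [hℓ, Finset.mul_sum, ← mul_assoc, mul_inv_cancel₀ hs.ne']
  have heq : bayesRiskPerspective lam η = ℓ η := by
    rw [hℓ, bayesRiskPerspective_of_sum_eq_one lam hη.2, bayesRisk]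
  rw [fderiv_eq_of_eventually_le_of_eq hle heq
    (differentiableAt_bayesRiskPerspective_of_sum_eq_one hη.2 hd) ℓ.differentiableAt, ℓ.fderiv, hℓ]

theorem bregman_bayesRisk_eq_neg_mul_bregman_genFun (hη : η ∈ posSimplex M)
    (hηs : ηs ∈ posSimplex M) (hd : DifferentiableAt ℝ lam η) :
    bregman (bayesRisk lam) ηs η = -(ηs 0 * bregman (genFun M lam) (rhoOf M ηs) (rhoOf M η)) := by
  have h0 : η 0 ≠ 0 := (hη.1 0).ne'
  have hs0 : ηs 0 ≠ 0 := (hηs.1 0).ne'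
  have hdG := differentiableAt_bayesRiskPerspective_of_sum_eq_one hη.2 hd
  have hhom := bayesRiskPerspective_smul lam
  have hdG' : DifferentiableAt ℝ (bayesRiskPerspective lam) (Fin.cons 1 (rhoOf M η)) := by
    rw [cons_one_rhoOf h0]
    exact (hasFDerivAt_smul_of_homogeneous hhom (inv_ne_zero h0) hdG).differentiableAt
  rw [bregman_genFun hdG', cons_one_rhoOf h0, cons_one_rhoOf hs0,
    bregman_smul_smul_of_homogeneous hhom _ (inv_ne_zero h0) hdG,
    bregman_bayesRisk_eq_bregman_bayesRiskPerspective hηs.2 hη.2 hd]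
  field_simp

theorem bregman_bayesRisk_of_proper
    (hproper : ∀ y ∈ posSimplex M, bayesRisk lam y ≤ ∑ i, y i * lam η i)
    (hη : η ∈ posSimplex M) (hηs : ηs ∈ posSimplex M) (hd : DifferentiableAt ℝ lam η) :
    bregman (bayesRisk lam) ηs η = bayesRisk lam ηs - ∑ i, ηs i * lam η i := by
  rw [bregman_bayesRisk_eq_bregman_bayesRiskPerspective hηs.2 hη.2 hd,
    bregman_eq_sub_fderiv_of_homogeneous (bayesRiskPerspective_smul lam)
      (differentiableAt_bayesRiskPerspective_of_sum_eq_one hη.2 hd),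
    fderiv_bayesRiskPerspective_of_proper hproper hη hd,
    bayesRiskPerspective_of_sum_eq_one lam hηs.2]

end Simplex

theorem bregman_bayesRisk_eq_neg_weighted_bregman_genFun_general
    (M : ℕ)
    (lam : (Fin (M + 1) → ℝ) → (Fin (M + 1) → ℝ))
    (U : Set (Fin (M + 1) → ℝ))
    (hΔU : posSimplex M ⊆ U)
    (h_diff : ∀ η ∈ U, DifferentiableAt ℝ lam η) :
    (∀ η ∈ posSimplex M, ∀ ηs ∈ posSimplex M,
        bregman (fun η' => ∑ i, η' i * lam η' i) ηs η
          = -(ηs 0 * bregman (genFun M lam) (rhoOf M ηs) (rhoOf M η)))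
    ∧ ((∀ ηs ∈ posSimplex M, ∀ ηh ∈ posSimplex M,
          (∑ i, ηs i * lam ηs i) ≤ ∑ i, ηs i * lam ηh i) →
        ∀ η ∈ posSimplex M, ∀ ηs ∈ posSimplex M,
          (∑ i, ηs i * lam η i) - (∑ i, ηs i * lam ηs i)
            = ηs 0 * bregman (genFun M lam) (rhoOf M ηs) (rhoOf M η)) := by
  refine ⟨fun η hη ηs hηs =>
    bregman_bayesRisk_eq_neg_mul_bregman_genFun hη hηs (h_diff η (hΔU hη)), ?_⟩
  intro hproper η hη ηs hηs
  have hd := h_diff η (hΔU hη)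
  have hsplit := bregman_bayesRisk_eq_neg_mul_bregman_genFun hη hηs hd
  rw [bregman_bayesRisk_of_proper (fun y hy => hproper y hy η hη) hη hηs hd, bayesRisk] at hsplit
  linarith

/-- for a scoring rule `λ` differentiable on an open neighborhood of `Δ°`,
`B_{f^λ}(η*, η) = −η*_0 · B_{Ψ^λ}(ρ(η*), ρ(η))` on `Δ°`; consequently, if `λ` is proper then
`Reg^λ(η ‖ η*) = η*_0 · B_{Ψ^λ}(ρ(η*), ρ(η))` on `Δ°`. -/
theorem bregman_bayesRisk_eq_neg_weighted_bregman_genFun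
    (M : ℕ) (hM : 1 ≤ M)
    (lam : (Fin (M + 1) → ℝ) → (Fin (M + 1) → ℝ))
    (U : Set (Fin (M + 1) → ℝ)) (hU : IsOpen U)
    (hΔU : posSimplex M ⊆ U)
    (h_diff : ∀ η ∈ U, DifferentiableAt ℝ lam η) :
    (∀ η ∈ posSimplex M, ∀ ηs ∈ posSimplex M,
        bregman (fun η' => ∑ i, η' i * lam η' i) ηs η
          = -(ηs 0 * bregman (genFun M lam) (rhoOf M ηs) (rhoOf M η)))
    ∧ ((∀ ηs ∈ posSimplex M, ∀ ηh ∈ posSimplex M,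
          (∑ i, ηs i * lam ηs i) ≤ ∑ i, ηs i * lam ηh i) →
        ∀ η ∈ posSimplex M, ∀ ηs ∈ posSimplex M,
          (∑ i, ηs i * lam η i) - (∑ i, ηs i * lam ηs i)
            = ηs 0 * bregman (genFun M lam) (rhoOf M ηs) (rhoOf M η)) :=
  bregman_bayesRisk_eq_neg_weighted_bregman_genFun_general M lam U hΔU h_diff
end
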